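/- Coefficient matching forces the recursion on d_n: Let α ≠ 0 and let (d_n)_{n≥2} be nonzero reals. Define P_2(x) = x² − α d_2^{−1}, P_3(x) = x³ − 2α d_3^{−1} x, and for n ≥ 4, P_n(x) = x^n − α(n−1)d_n^{−1}x^{n−2} + α²((n−2)(n−3)/2)d_n^{−1}d_{n−1}^{−1}x^{n−4} + (lower terms). If x·P_n = P_{n+1} + ω_n P_{n−1} with ω_n = α(n·d_{n+1}^{−1} − (n−1)d_n^{−1}) for all n ≥ 3, then (n+1)d_{n+1} = 2n·d_n − (n−1)d_{n−1} for all n ≥ 3. -/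

import Mathlib

/-! Clearing denominators, the coefficient identity is `α² (n - 2) / (2 d_{n-1} d_n d_{n+1})`
times `(n - 3) d_{n+1} - (n - 1) d_{n-1} - 2 ((n - 1) d_{n+1} - n d_n)`. For `n ≥ 3` the
prefactor is nonzero, so the second factor vanishes, which is the recursion rearranged. -/

section CoefficientIdentity

variable {K : Type*} [Field K] {α x p q r : K}

theorem coeff_identity_eq_mul (h2 : (2 : K) ≠ 0) (hp : p ≠ 0) (hq : q ≠ 0) (hr : r ≠ 0) :
    α ^ 2 * (((x - 2) * (x - 3)) / 2) * q⁻¹ * p⁻¹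
        - α ^ 2 * (((x - 1) * (x - 2)) / 2) * r⁻¹ * q⁻¹
        - (α * ((x - 1) * q⁻¹ - x * r⁻¹)) * (α * (x - 2) * p⁻¹) =
      α ^ 2 * (x - 2) / (2 * p * q * r) *
        ((x - 3) * r - (x - 1) * p - 2 * ((x - 1) * r - x * q)) := by
  field_simp

theorem recursion_of_coeff_identity (h2 : (2 : K) ≠ 0) (hα : α ≠ 0) (hx : x ≠ 2)
    (hp : p ≠ 0) (hq : q ≠ 0) (hr : r ≠ 0)
    (h : α ^ 2 * (((x - 2) * (x - 3)) / 2) * q⁻¹ * p⁻¹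
        - α ^ 2 * (((x - 1) * (x - 2)) / 2) * r⁻¹ * q⁻¹
        - (α * ((x - 1) * q⁻¹ - x * r⁻¹)) * (α * (x - 2) * p⁻¹) = 0) :
    (x + 1) * r = 2 * x * q - (x - 1) * p := by
  rw [coeff_identity_eq_mul h2 hp hq hr] at h
  have hfactor : α ^ 2 * (x - 2) / (2 * p * q * r) ≠ 0 := by
    have : x - 2 ≠ 0 := sub_ne_zero.mpr hx
    positivity
  linear_combination -(mul_eq_zero.mp h).resolve_left hfactor

end CoefficientIdentity

theorem stmt_18 (α : ℝ) (hα : α ≠ 0) (d : ℕ → ℝ)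
    (hd : ∀ n : ℕ, 2 ≤ n → d n ≠ 0)
    (hcoeff : ∀ n : ℕ, 3 ≤ n →
      α ^ 2 * ((((n : ℝ) - 2) * ((n : ℝ) - 3)) / 2) * (d n)⁻¹ * (d (n - 1))⁻¹
        - α ^ 2 * ((((n : ℝ) - 1) * ((n : ℝ) - 2)) / 2) * (d (n + 1))⁻¹ * (d n)⁻¹
        - (α * (((n : ℝ) - 1) * (d n)⁻¹ - (n : ℝ) * (d (n + 1))⁻¹)) *
            (α * ((n : ℝ) - 2) * (d (n - 1))⁻¹) = 0) :
    ∀ n : ℕ, 3 ≤ n →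
      ((n : ℝ) + 1) * d (n + 1) = 2 * n * d n - ((n : ℝ) - 1) * d (n - 1) := by
  intro n hn
  have hn2 : (n : ℝ) ≠ 2 := by
    have : (3 : ℝ) ≤ n := by exact_mod_cast hn
    linarith
  exact recursion_of_coeff_identity two_ne_zero hα hn2 (hd (n - 1) (by omega)) (hd n (by omega))
    (hd (n + 1) (by omega)) (hcoeff n hn)
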